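/- arXiv:1112.6236 — 2 statements merged into one kernel-verified Lean document; each statement's English description precedes it below -/
import Mathlib

section
/- Let X be a compact Hausdorff extremally disconnected topological space, let n be a positive natural number, and let A = C(X, M_n(ℂ)) be the algebra of continuous functions from X to the algebra M_n(ℂ) of n×n complex matrices, with pointwise operations. Every 2-local inner derivation Δ : A → A is a derivation, i.e., Δ is additive, ℂ-homogeneous, and satisfies Δ(x·y) = Δ(x)·y + x·Δ(y) for all x, y ∈ A. -/
/-!
Choose `a` implementing `Δ` simultaneously on a constant diagonal matrix `U` with distinct entries
and on the constant all-ones matrix `J`; then `Δ' = Δ - [a, ·]` is again a 2-local inner derivation,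
and it kills `U` and `J`. Using 2-locality at `(x, U)`, `Δ' x = [b, x]` with `b` pointwise diagonal,
so `Δ'` maps a constant matrix unit `E_ij` to some `λ E_ij`. Using it at `(x, y)`,
`tr (Δ' x * y + x * Δ' y) = tr [b, x y] = 0` pointwise; `y = J` gives `λ = 0`, and then `y = E_lk`
gives `(Δ' x)_kl = 0`. So `Δ = [a, ·]`.
-/

open Matrix ContinuousMap

def IsTwoLocalInnerDerivation {A : Type*} [Ring A] (Δ : A → A) : Prop :=
  ∀ x y : A, ∃ a : A, Δ x = a * x - x * a ∧ Δ y = a * y - y * a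

theorem map_add_and_map_smul_and_leibniz_of_forall_eq_commutator {R A : Type*} [Ring A]
    [DistribSMul R A] [SMulCommClass R A A] [IsScalarTower R A A]
    {Δ : A → A} {a : A} (ha : ∀ x, Δ x = a * x - x * a) :
    (∀ x y, Δ (x + y) = Δ x + Δ y) ∧
    (∀ (c : R) x, Δ (c • x) = c • Δ x) ∧
    (∀ x y, Δ (x * y) = Δ x * y + x * Δ y) := by
  refine ⟨fun x y => ?_, fun c x => ?_, fun x y => ?_⟩
  · rw [ha, ha, ha]; noncomm_ring
  · rw [ha, ha, mul_smul_comm, smul_mul_assoc, smul_sub]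
  · rw [ha, ha, ha]; noncomm_ring

namespace IsTwoLocalInnerDerivation

variable {A : Type*} [Ring A] {Δ : A → A}

theorem sub_commutator (hΔ : IsTwoLocalInnerDerivation Δ) (a : A) :
    IsTwoLocalInnerDerivation fun x => Δ x - (a * x - x * a) := by
  intro x y
  obtain ⟨b, hx, hy⟩ := hΔ x y
  exact ⟨b - a, by simp only [hx]; noncomm_ring, by simp only [hy]; noncomm_ring⟩

theorem exists_commute_of_apply_eq_zero (hΔ : IsTwoLocalInnerDerivation Δ) {u : A}
    (hu : Δ u = 0) (x : A) : ∃ b, Δ x = b * x - x * b ∧ Commute b u := by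
  obtain ⟨b, hx, hu'⟩ := hΔ x u
  exact ⟨b, hx, sub_eq_zero.mp (hu' ▸ hu)⟩

theorem map_apply_mul_add_mul_apply_eq_zero {R : Type*} [Zero R]
    (hΔ : IsTwoLocalInnerDerivation Δ) (τ : A → R) (hτ : ∀ a b, τ (a * b - b * a) = 0)
    (x y : A) : τ (Δ x * y + x * Δ y) = 0 := by
  obtain ⟨b, hx, hy⟩ := hΔ x y
  rw [hx, hy]
  convert hτ b (x * y) using 2
  noncomm_ring

end IsTwoLocalInnerDerivation

namespace Matrix

variable {ι R : Type*} [Fintype ι] [DecidableEq ι] [CommRing R]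

theorem isDiag_of_commute_diagonal [NoZeroDivisors R] {d : ι → R} (hd : Function.Injective d)
    {b : Matrix ι ι R} (h : Commute b (diagonal d)) : b.IsDiag := by
  intro i j hij
  have hij' := congrFun (congrFun h.eq i) j
  rw [mul_diagonal, diagonal_mul] at hij'
  have : b i j * (d j - d i) = 0 := by linear_combination hij'
  exact (mul_eq_zero.mp this).resolve_right (sub_ne_zero.mpr (hd.ne (Ne.symm hij)))

theorem IsDiag.mul_single_sub_single_mul {b : Matrix ι ι R} (hb : b.IsDiag) (i j : ι) (c : R) :
    b * single i j c - single i j c * b = single i j ((b i i - b j j) * c) := by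
  conv_lhs => rw [← hb.diagonal_diag]
  ext k l
  rw [sub_apply, diagonal_mul, mul_diagonal]
  simp only [single_apply, diag_apply]
  split_ifs with h
  · obtain ⟨rfl, rfl⟩ := h
    ring
  · ring

end Matrix

namespace IsTwoLocalInnerDerivation

variable {X ι R : Type*} [TopologicalSpace X] [Fintype ι] [DecidableEq ι] [CommRing R]
  [TopologicalSpace R] [IsTopologicalRing R] {Δ : C(X, Matrix ι ι R) → C(X, Matrix ι ι R)}

theorem trace_apply_mul_eq_neg (hΔ : IsTwoLocalInnerDerivation Δ) (x y : C(X, Matrix ι ι R))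
    (p : X) : trace (Δ x p * y p) = -trace (x p * Δ y p) := by
  have := hΔ.map_apply_mul_add_mul_apply_eq_zero (fun f => trace (f p))
    (fun a b => by simp [trace_mul_comm (a p)]) x y
  simpa [trace_add, add_eq_zero_iff_eq_neg] using this

theorem apply_const_single_eq_zero [NoZeroDivisors R] (hΔ : IsTwoLocalInnerDerivation Δ)
    {d : ι → R} (hd : Function.Injective d) (hu : Δ (const X (diagonal d)) = 0)
    (hj : Δ (const X (of fun _ _ => 1)) = 0) (i j : ι) : Δ (const X (single i j 1)) = 0 := by
  obtain ⟨b, hE, hb⟩ := hΔ.exists_commute_of_apply_eq_zero hu (const X (single i j 1))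
  ext p : 1
  have hbp : (b p).IsDiag := isDiag_of_commute_diagonal hd (congrArg (fun f => f p) hb.eq :)
  have hEp : Δ (const X (single i j 1)) p = single i j (b p i i - b p j j) := by
    simp [hE, hbp.mul_single_sub_single_mul]
  have hlam : b p i i - b p j j = 0 := by
    simpa [hEp, hj, trace_single_mul] using
      hΔ.trace_apply_mul_eq_neg (const X (single i j 1)) (const X (of fun _ _ => 1)) p
  rw [hEp, hlam, single_zero]
  rfl

theorem eq_zero_of_apply_const_diagonal_of_apply_const_ones [NoZeroDivisors R]
    (hΔ : IsTwoLocalInnerDerivation Δ) {d : ι → R} (hd : Function.Injective d)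
    (hu : Δ (const X (diagonal d)) = 0) (hj : Δ (const X (of fun _ _ => 1)) = 0) : Δ = 0 := by
  funext x
  ext p k l
  simpa [trace_mul_single, hΔ.apply_const_single_eq_zero hd hu hj] using
    hΔ.trace_apply_mul_eq_neg x (const X (single l k 1)) p

theorem exists_forall_eq_commutator [NoZeroDivisors R] (hΔ : IsTwoLocalInnerDerivation Δ)
    {d : ι → R} (hd : Function.Injective d) : ∃ a, ∀ x, Δ x = a * x - x * a := by
  obtain ⟨a, hu, hj⟩ := hΔ (const X (diagonal d)) (const X (of fun _ _ => 1))
  have hΔ' := (hΔ.sub_commutator a).eq_zero_of_apply_const_diagonal_of_apply_const_ones hd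
    (sub_eq_zero.mpr hu) (sub_eq_zero.mpr hj)
  exact ⟨a, fun x => sub_eq_zero.mp (congrFun hΔ' x)⟩

end IsTwoLocalInnerDerivation

theorem twoLocal_inner_derivation_is_derivation_CX_Mn_general
    (X : Type*) [TopologicalSpace X]
    (n : ℕ)
    (Δ : C(X, Matrix (Fin n) (Fin n) ℂ) → C(X, Matrix (Fin n) (Fin n) ℂ))
    (h2loc : ∀ x y : C(X, Matrix (Fin n) (Fin n) ℂ),
      ∃ a : C(X, Matrix (Fin n) (Fin n) ℂ),
        Δ x = a * x - x * a ∧ Δ y = a * y - y * a) :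
    (∀ x y, Δ (x + y) = Δ x + Δ y) ∧
    (∀ (c : ℂ) x, Δ (c • x) = c • Δ x) ∧
    (∀ x y, Δ (x * y) = Δ x * y + x * Δ y) := by
  have hd : Function.Injective fun i : Fin n => ((i : ℕ) : ℂ) :=
    Nat.cast_injective.comp Fin.val_injective
  obtain ⟨a, ha⟩ := IsTwoLocalInnerDerivation.exists_forall_eq_commutator h2loc hd
  exact map_add_and_map_smul_and_leibniz_of_forall_eq_commutator ha

/-- Every 2-local inner derivation on `C(X, Mₙ(ℂ))`, for `X` a compact Hausdorff
extremally disconnected space and `n` a positive natural number, is a derivation. -/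
theorem twoLocal_inner_derivation_is_derivation_CX_Mn
    (X : Type*) [TopologicalSpace X] [CompactSpace X] [T2Space X]
    [ExtremallyDisconnected X]
    (n : ℕ) (hn : 0 < n)
    (Δ : C(X, Matrix (Fin n) (Fin n) ℂ) → C(X, Matrix (Fin n) (Fin n) ℂ))
    (h2loc : ∀ x y : C(X, Matrix (Fin n) (Fin n) ℂ),
      ∃ a : C(X, Matrix (Fin n) (Fin n) ℂ),
        Δ x = a * x - x * a ∧ Δ y = a * y - y * a) :
    (∀ x y, Δ (x + y) = Δ x + Δ y) ∧
    (∀ (c : ℂ) x, Δ (c • x) = c • Δ x) ∧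
    (∀ x y, Δ (x * y) = Δ x * y + x * Δ y) :=
  twoLocal_inner_derivation_is_derivation_CX_Mn_general X n Δ h2loc
end

section
/- Let A be an associative algebra over ℂ which is semiprime, in the sense that for every a ∈ A, if a·x·a = 0 for all x ∈ A then a = 0. Let Δ : A → A be a 2-local derivation (for every pair x, y ∈ A there exists a ℂ-linear derivation D : A → A with Δ(x) = D(x) and Δ(y) = D(y)). If Δ is additive, then Δ is a derivation, i.e., Δ is ℂ-linear and satisfies Δ(x·y) = Δ(x)·y + x·Δ(y) for all x, y ∈ A. -/
/-!
An additive 2-local derivation `Δ` agrees with a derivation on each pair `{x, c • x}` and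
`{x, x * x}`, so it is homogeneous and a Jordan derivation; it remains to prove Brešar's theorem
that a Jordan derivation `d` of a 2-torsion-free semiprime ring is a derivation.

Let `δ(a, b) = d (a * b) - d a * b - a * d b`. Expanding `d (ab x ba + ba x ab)` in two ways gives
`δ(a, b) x [a, b] = - [a, b] x δ(a, b)` for all `x`, and semiprimeness turns this into
`δ(a, b) x [a, b] = 0`. Linearizing in `b` and then in `a`, semiprimeness once more gives
`δ(a, b) x [u, v] = 0` for all `u, v, x`. So `c = δ(a, b)` is central and annihilates all
commutators; since `2 c = d [a, b] - [d a, b] - [a, d b]`, the Jordan identity for the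
anticommuting pair `c, [a, b]` yields `c ^ 3 = 0`, and a central nilpotent of a semiprime ring
vanishes.
-/

def IsSemiprimeRing (R : Type*) [Ring R] : Prop :=
  ∀ a : R, (∀ x : R, a * x * a = 0) → a = 0

namespace IsSemiprimeRing

variable {R : Type*} [Ring R]

theorem mul_mul_eq_zero_of_add_swap [IsAddTorsionFree R] (hR : IsSemiprimeRing R) {p q : R}
    (h : ∀ x, p * x * q + q * x * p = 0) (x : R) : p * x * q = 0 := by
  have hq : ∀ t s : R, q * t * (p * s * q) = 0 := fun t s =>
    two_nsmul_eq_zero.mp <| by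
      rw [two_nsmul]
      linear_combination (norm := noncomm_ring) q * t * h s + h t * (s * q) - h (t * q * s)
  exact hR _ fun y => by linear_combination (norm := noncomm_ring) p * x * hq y x

theorem mul_mul_eq_zero_of_add_eq_zero (hR : IsSemiprimeRing R) {p q p' q' : R}
    (h : ∀ x, p * x * q' + p' * x * q = 0) (h' : ∀ x, p' * x * q' = 0) (x : R) :
    p * x * q' = 0 :=
  hR _ fun y => by
    linear_combination (norm := noncomm_ring) h (x * q' * y * p * x) - h' x * (y * p * x * q)

theorem mul_comm_of_mul_mul_commutator_eq_zero (hR : IsSemiprimeRing R) {c y : R}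
    (h : ∀ t, c * t * (c * y - y * c) = 0) : c * y = y * c :=
  sub_eq_zero.mp <| hR _ fun x => by
    linear_combination (norm := noncomm_ring) h (y * x) - y * h x

theorem eq_zero_of_mul_self_eq_zero (hR : IsSemiprimeRing R) {c : R} (hc : ∀ y, c * y = y * c)
    (h : c * c = 0) : c = 0 :=
  hR c fun x => by rw [mul_assoc, ← hc x, ← mul_assoc, h, zero_mul]

end IsSemiprimeRing

section JordanDerivation

variable {R : Type*} [Ring R]

def IsJordanDerivation (d : R →+ R) : Prop :=
  ∀ x : R, d (x * x) = d x * x + x * d x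

def leibnizDefect (d : R →+ R) (a b : R) : R :=
  d (a * b) - d a * b - a * d b

variable {d : R →+ R}

theorem leibnizDefect_add_left (a a' b : R) :
    leibnizDefect d (a + a') b = leibnizDefect d a b + leibnizDefect d a' b := by
  simp only [leibnizDefect, add_mul, map_add]
  abel

theorem leibnizDefect_add_right (a b b' : R) :
    leibnizDefect d a (b + b') = leibnizDefect d a b + leibnizDefect d a b' := by
  simp only [leibnizDefect, mul_add, map_add]
  abel

namespace IsJordanDerivation

theorem map_mul_add_mul_swap (hd : IsJordanDerivation d) (a b : R) :
    d (a * b + b * a) = d a * b + a * d b + d b * a + b * d a := by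
  have h := hd (a + b)
  rw [show (a + b) * (a + b) = a * a + (a * b + b * a) + b * b by noncomm_ring,
    map_add, map_add, hd a, hd b, map_add d a b] at h
  linear_combination (norm := noncomm_ring) h

theorem leibnizDefect_add_leibnizDefect_swap (hd : IsJordanDerivation d) (a b : R) :
    leibnizDefect d a b + leibnizDefect d b a = 0 := by
  have h := hd.map_mul_add_mul_swap a b
  rw [map_add] at h
  unfold leibnizDefect
  linear_combination (norm := noncomm_ring) h

theorem map_mul_mul_self [IsAddTorsionFree R] (hd : IsJordanDerivation d) (a b : R) :
    d (a * b * a) = d a * b * a + a * d b * a + a * b * d a := by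
  have h := hd.map_mul_add_mul_swap a (a * b + b * a)
  have e : d (a * (a * b + b * a) + (a * b + b * a) * a)
      = d (a * a * b + b * (a * a)) + (d (a * b * a) + d (a * b * a)) := by
    rw [← map_add, ← map_add]
    congr 1
    noncomm_ring
  rw [e, hd.map_mul_add_mul_swap (a * a) b, hd a, hd.map_mul_add_mul_swap a b] at h
  refine (nsmul_right_inj (M := R) two_ne_zero).mp ?_
  simp only [two_nsmul]
  linear_combination (norm := noncomm_ring) h

theorem map_mul_mul_add_mul_mul [IsAddTorsionFree R] (hd : IsJordanDerivation d) (a b c : R) :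
    d (a * b * c + c * b * a)
      = d a * b * c + a * d b * c + a * b * d c + d c * b * a + c * d b * a + c * b * d a := by
  have h := hd.map_mul_mul_self (a + c) b
  rw [show (a + c) * b * (a + c) = a * b * a + (a * b * c + c * b * a) + c * b * c by noncomm_ring,
    map_add, map_add, hd.map_mul_mul_self, hd.map_mul_mul_self, map_add d a c] at h
  linear_combination (norm := noncomm_ring) h

/-- Both sides come from expanding `d (ab x ba + ba x ab)`, once as
`d (a (b x b) a) + d (b (a x a) b)` and once by `map_mul_mul_add_mul_mul`. -/
theorem leibnizDefect_mul_mul_commutator_add [IsAddTorsionFree R] (hd : IsJordanDerivation d)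
    (a b x : R) :
    leibnizDefect d a b * x * (a * b - b * a) + (a * b - b * a) * x * leibnizDefect d a b = 0 := by
  have e1 := hd.map_mul_mul_self a (b * x * b)
  rw [hd.map_mul_mul_self b x] at e1
  have e2 := hd.map_mul_mul_self b (a * x * a)
  rw [hd.map_mul_mul_self a x] at e2
  have e3 := hd.map_mul_mul_add_mul_mul (a * b) x (b * a)
  have e4 : d (a * b * x * (b * a) + b * a * x * (a * b))
      = d (a * (b * x * b) * a) + d (b * (a * x * a) * b) := by
    rw [← map_add]
    congr 1
    noncomm_ring
  have hswap := hd.leibnizDefect_add_leibnizDefect_swap a b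
  unfold leibnizDefect at hswap ⊢
  linear_combination (norm := noncomm_ring)
    e3 - e4 - e1 - e2 + a * b * x * hswap + hswap * x * (a * b)

theorem leibnizDefect_mul_mul_commutator_self [IsAddTorsionFree R] (hR : IsSemiprimeRing R)
    (hd : IsJordanDerivation d) (a b x : R) :
    leibnizDefect d a b * x * (a * b - b * a) = 0 :=
  hR.mul_mul_eq_zero_of_add_swap (hd.leibnizDefect_mul_mul_commutator_add a b) x

theorem leibnizDefect_mul_mul_commutator_left [IsAddTorsionFree R] (hR : IsSemiprimeRing R)
    (hd : IsJordanDerivation d) (a b b' x : R) :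
    leibnizDefect d a b * x * (a * b' - b' * a) = 0 := by
  refine hR.mul_mul_eq_zero_of_add_eq_zero (q := a * b - b * a) (fun x => ?_)
    (hd.leibnizDefect_mul_mul_commutator_self hR a b') x
  have h := hd.leibnizDefect_mul_mul_commutator_self hR a (b + b') x
  rw [leibnizDefect_add_right] at h
  linear_combination (norm := noncomm_ring) h - hd.leibnizDefect_mul_mul_commutator_self hR a b x
    - hd.leibnizDefect_mul_mul_commutator_self hR a b' x

theorem leibnizDefect_mul_mul_commutator [IsAddTorsionFree R] (hR : IsSemiprimeRing R)
    (hd : IsJordanDerivation d) (a b u v x : R) :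
    leibnizDefect d a b * x * (u * v - v * u) = 0 := by
  refine hR.mul_mul_eq_zero_of_add_eq_zero (q := a * v - v * a) (fun x => ?_)
    (hd.leibnizDefect_mul_mul_commutator_left hR u b v) x
  have h := hd.leibnizDefect_mul_mul_commutator_left hR (a + u) b v x
  rw [leibnizDefect_add_left] at h
  linear_combination (norm := noncomm_ring) h - hd.leibnizDefect_mul_mul_commutator_left hR a b v x
    - hd.leibnizDefect_mul_mul_commutator_left hR u b v x

theorem leibnizDefect_eq_zero [IsAddTorsionFree R] (hR : IsSemiprimeRing R)
    (hd : IsJordanDerivation d) (a b : R) : leibnizDefect d a b = 0 := by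
  set c := leibnizDefect d a b with hc
  have hann : ∀ t u v : R, c * t * (u * v - v * u) = 0 := fun t u v =>
    hd.leibnizDefect_mul_mul_commutator hR a b u v t
  have hcomm : ∀ y, c * y = y * c := fun y =>
    hR.mul_comm_of_mul_mul_commutator_eq_zero fun t => hann t c y
  have hcomm' : ∀ u v : R, c * (u * v - v * u) = 0 := fun u v => by
    simpa only [mul_one] using hann 1 u v
  have htwo : c + c = d (a * b - b * a) - (d a * b - b * d a) - (a * d b - d b * a) := by
    have h := hd.leibnizDefect_add_leibnizDefect_swap a b
    unfold leibnizDefect at h hc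
    rw [map_sub]
    linear_combination (norm := noncomm_ring) h + 2 * hc
  have hdk : c * d (a * b - b * a) = c * c + c * c := by
    linear_combination (norm := noncomm_ring) hcomm' (d a) b + hcomm' a (d b) - c * htwo
  have hJ := hd.map_mul_add_mul_swap c (a * b - b * a)
  have hanti : c * (a * b - b * a) + (a * b - b * a) * c = 0 := by
    rw [← hcomm, hcomm' a b, add_zero]
  rw [hanti, map_zero] at hJ
  have hcube : c * c * c = 0 := (nsmul_eq_zero_iff_right four_ne_zero).mp <| by
    linear_combination (norm := noncomm_ring) -(c * hJ) - c * hdk - hdk * c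
      - hcomm (d c) * (a * b - b * a) - d c * hcomm' a b - hcomm' a b * d c
  have hsq : c * c = 0 := hR.eq_zero_of_mul_self_eq_zero
    (fun y => by rw [mul_assoc, hcomm, ← mul_assoc, hcomm, mul_assoc])
    (by rw [← mul_assoc, hcube, zero_mul])
  exact hR.eq_zero_of_mul_self_eq_zero hcomm hsq

theorem map_mul [IsAddTorsionFree R] (hR : IsSemiprimeRing R) (hd : IsJordanDerivation d)
    (a b : R) : d (a * b) = d a * b + a * d b := by
  have h := hd.leibnizDefect_eq_zero hR a b
  unfold leibnizDefect at h
  linear_combination (norm := noncomm_ring) h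

end IsJordanDerivation

end JordanDerivation

def IsTwoLocalDerivation (K : Type*) {A : Type*} [Semiring K] [NonUnitalNonAssocSemiring A]
    [Module K A] (Δ : A → A) : Prop :=
  ∀ x y : A, ∃ D : A →ₗ[K] A,
    (∀ u v : A, D (u * v) = D u * v + u * D v) ∧ Δ x = D x ∧ Δ y = D y

namespace IsTwoLocalDerivation

variable {K A : Type*} [Semiring K] [NonUnitalNonAssocSemiring A] [Module K A] {Δ : A → A}

theorem map_smul (hΔ : IsTwoLocalDerivation K Δ) (c : K) (x : A) : Δ (c • x) = c • Δ x := by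
  obtain ⟨D, -, hx, hcx⟩ := hΔ x (c • x)
  rw [hcx, D.map_smul, hx]

theorem map_mul_self (hΔ : IsTwoLocalDerivation K Δ) (x : A) :
    Δ (x * x) = Δ x * x + x * Δ x := by
  obtain ⟨D, hD, hx, hxx⟩ := hΔ x (x * x)
  rw [hxx, hD, hx]

end IsTwoLocalDerivation

/-- On a semiprime associative ℂ-algebra, every additive 2-local derivation is a
derivation. -/
theorem additive_twoLocal_derivation_is_derivation_semiprime
    (A : Type*) [Ring A] [Algebra ℂ A]
    (hsp : ∀ a : A, (∀ x : A, a * x * a = 0) → a = 0)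
    (Δ : A → A)
    (h2loc : ∀ x y : A, ∃ D : A →ₗ[ℂ] A,
      (∀ u v : A, D (u * v) = D u * v + u * D v) ∧ Δ x = D x ∧ Δ y = D y)
    (hadd : ∀ x y : A, Δ (x + y) = Δ x + Δ y) :
    (∀ (c : ℂ) (x : A), Δ (c • x) = c • Δ x) ∧
    (∀ x y : A, Δ (x * y) = Δ x * y + x * Δ y) := by
  have hΔ : IsTwoLocalDerivation ℂ Δ := h2loc
  have : IsAddTorsionFree A := .of_isTorsionFree ℂ A
  have hJordan : IsJordanDerivation (AddMonoidHom.mk' Δ hadd) := hΔ.map_mul_self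
  exact ⟨hΔ.map_smul, hJordan.map_mul hsp⟩
end
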